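/- Let * be a continuous t-norm, p ∈ [0,∞), a ∈ [0,1], and let ξ be a distance distribution. Then ξ ≤ κ_{p,a} pointwise if and only if there exists a distance distribution ψ with κ_{p,a} ⊗ ψ = ξ. In other words, the distance distributions that are divisible by the one-step function κ_{p,a} are exactly those below κ_{p,a}. -/

import Mathlib

open unitInterval
open scoped ENNReal

noncomputable section

instance : Fact ((0:ℝ) ≤ 1) := ⟨zero_le_one⟩

/-- A distance distribution: a map `φ : [0,∞] → [0,1]` with `φ t = ⨆ s < t, φ s`. -/
def DistDistr (φ : ℝ≥0∞ → I) : Prop :=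
  ∀ t, φ t = ⨆ (s : ℝ≥0∞) (_ : s < t), φ s

/-- The one-step function `κ_{p,a}`. -/
def kappa (p : ℝ≥0∞) (a : I) : ℝ≥0∞ → I :=
  fun t => if t ≤ p then 0 else a

/-- A continuous t-norm on `[0,1]`. -/
structure ContinuousTNorm where
  mul : I → I → I
  continuous' : Continuous fun p : I × I => mul p.1 p.2
  comm : ∀ a b, mul a b = mul b a
  assoc : ∀ a b c, mul (mul a b) c = mul a (mul b c)
  mono : ∀ a, Monotone (mul a)
  mul_one : ∀ a, mul a 1 = a

/-- The residual `a →* b` of a continuous t-norm. -/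
def ContinuousTNorm.residual (T : ContinuousTNorm) (a b : I) : I :=
  sSup {c | T.mul a c ≤ b}

/-- Convolution of maps `[0,∞] → [0,1]` w.r.t. a continuous t-norm. -/
def conv (T : ContinuousTNorm) (φ ψ : ℝ≥0∞ → I) : ℝ≥0∞ → I :=
  fun t => ⨆ (r : ℝ≥0∞) (s : ℝ≥0∞) (_ : r + s = t), T.mul (φ r) (ψ s)

/-- `φ⁻ t = ⨆ s < t, φ s`. -/
def lower (φ : ℝ≥0∞ → I) : ℝ≥0∞ → I :=
  fun t => ⨆ (s : ℝ≥0∞) (_ : s < t), φ s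

/-!
Convolving with `κ_{p,a}` gives `(κ_{p,a} ⊗ ψ)(t) = a * ⨆_{p + s < t} ψ s`, which is at most `a`
and vanishes for `t ≤ p`. Conversely, if `ξ ≤ κ_{p,a}`, continuity of `*` lets us divide:
choose `χ s` with `a * χ s = ξ (p + s)`. Its left-continuous regularisation `ψ = χ⁻` is a
distance distribution, and since `*` commutes with suprema,
`a * ⨆_{p + s < t} ψ s = ⨆_{p + s < t} ⨆_{u < s} ξ (p + u)`, which is `ξ t` because `ξ` is
left-continuous and vanishes on `[0, p]`.
-/

namespace ContinuousTNorm

variable (T : ContinuousTNorm)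

lemma continuous_mul_left (a : I) : Continuous (T.mul a) :=
  T.continuous'.comp (Continuous.prodMk_right a)

lemma mul_le_left (a b : I) : T.mul a b ≤ a :=
  (T.mono a le_one').trans_eq (T.mul_one a)

lemma zero_mul (a : I) : T.mul 0 a = 0 :=
  le_antisymm (T.mul_le_left 0 a) nonneg'

lemma mul_zero (a : I) : T.mul a 0 = 0 :=
  (T.comm a 0).trans (T.zero_mul a)

lemma mul_iSup {ι : Sort*} (a : I) (g : ι → I) :
    T.mul a (⨆ i, g i) = ⨆ i, T.mul a (g i) :=
  Monotone.map_iSup_of_continuousAt (T.continuous_mul_left a).continuousAt (T.mono a)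
    (T.mul_zero a)

lemma mul_iSup₂ {ι : Sort*} {κ : ι → Sort*} (a : I) (g : (i : ι) → κ i → I) :
    T.mul a (⨆ (i) (j), g i j) = ⨆ (i) (j), T.mul a (g i j) := by
  simp only [mul_iSup]

lemma exists_mul_eq {a b : I} (h : b ≤ a) : ∃ c, T.mul a c = b := by
  have hb : b ∈ Set.Icc (T.mul a 0) (T.mul a 1) := by
    rw [T.mul_zero, T.mul_one]
    exact ⟨nonneg', h⟩
  exact intermediate_value_univ 0 1 (T.continuous_mul_left a) hb

end ContinuousTNorm

lemma DistDistr.monotone {φ : ℝ≥0∞ → I} (hφ : DistDistr φ) : Monotone φ := by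
  intro s t hst
  rcases hst.eq_or_lt with rfl | hlt
  · exact le_rfl
  · exact (le_iSup₂_of_le s hlt le_rfl).trans_eq (hφ t).symm

lemma distDistr_lower (φ : ℝ≥0∞ → I) : DistDistr (lower φ) := by
  intro t
  refine le_antisymm (iSup₂_le fun u hu => ?_) (iSup₂_le fun u hu => ?_)
  · obtain ⟨m, hum, hmt⟩ := exists_between hu
    exact le_iSup₂_of_le m hmt (le_iSup₂_of_le u hum le_rfl)
  · exact iSup₂_le fun v hv => le_iSup₂_of_le v (hv.trans hu) le_rfl

lemma forall_le_kappa_iff {p : ℝ≥0∞} {a : I} {ξ : ℝ≥0∞ → I} :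
    (∀ t, ξ t ≤ kappa p a t) ↔ (∀ t, ξ t ≤ a) ∧ ∀ t ≤ p, ξ t = 0 := by
  refine ⟨fun h => ⟨fun t => ?_, fun t ht => ?_⟩, fun ⟨hle, hzero⟩ t => ?_⟩
  · refine (h t).trans ?_
    unfold kappa
    split_ifs
    exacts [nonneg', le_rfl]
  · simpa [kappa, ht] using h t
  · unfold kappa
    split_ifs with ht
    exacts [(hzero t ht).le, hle t]

/-- Only the terms with `r > p` survive, and `ψ s` for `r + s = t` is approximated from
below by `ψ u` with `u < s`, for which `p + u < r + s = t`. -/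
lemma conv_kappa_apply (T : ContinuousTNorm) (p : ℝ≥0∞) (a : I) {ψ : ℝ≥0∞ → I}
    (hψ : DistDistr ψ) (t : ℝ≥0∞) :
    conv T (kappa p a) ψ t = T.mul a (⨆ (s) (_ : p + s < t), ψ s) := by
  refine le_antisymm (iSup₂_le fun r s => iSup_le fun hrs => ?_) ?_
  · unfold kappa
    split_ifs with hr
    · exact (T.zero_mul _).trans_le nonneg'
    · refine T.mono a ?_
      rw [hψ s]
      refine iSup₂_le fun u hu => le_iSup₂_of_le u ?_ le_rfl
      exact hrs ▸ ENNReal.add_lt_add (not_le.mp hr) hu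
  · rw [T.mul_iSup₂]
    refine iSup₂_le fun s hs => ?_
    have hst : s ≤ t := le_add_self.trans hs.le
    have hr : ¬ t - s ≤ p := not_le.mpr (lt_tsub_iff_right.mpr hs)
    refine le_iSup₂_of_le (t - s) s (le_iSup_of_le (tsub_add_cancel_of_le hst) ?_)
    simp only [kappa, if_neg hr, le_rfl]

lemma DistDistr.iSup_lower_comp_add {ξ : ℝ≥0∞ → I} (hξ : DistDistr ξ) {p : ℝ≥0∞}
    (hzero : ∀ t ≤ p, ξ t = 0) (t : ℝ≥0∞) :
    ⨆ (s) (_ : p + s < t), lower (fun u => ξ (p + u)) s = ξ t := by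
  refine le_antisymm (iSup₂_le fun s hs => iSup₂_le fun u hu => ?_) ?_
  · exact hξ.monotone (add_le_add_right hu.le p |>.trans hs.le)
  · rw [hξ t]
    refine iSup₂_le fun v hv => ?_
    rcases le_or_gt v p with hvp | hpv
    · exact (hzero v hvp).trans_le nonneg'
    obtain ⟨m, hvm, hmt⟩ := exists_between hv
    have hpm : p + (m - p) = m := add_tsub_cancel_of_le (hpv.trans hvm).le
    have hpv' : p + (v - p) = v := add_tsub_cancel_of_le hpv.le
    refine le_iSup₂_of_le (m - p) (by rwa [hpm]) (le_iSup₂_of_le (v - p) ?_ ?_)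
    · rwa [lt_tsub_iff_left, hpv']
    · exact (congrArg ξ hpv').ge

theorem stmt_12_general (T : ContinuousTNorm) (p : ℝ≥0∞) (a : I)
    (ξ : ℝ≥0∞ → I) (hξ : DistDistr ξ) :
    (∀ t, ξ t ≤ kappa p a t) ↔
      ∃ ψ : ℝ≥0∞ → I, DistDistr ψ ∧ conv T (kappa p a) ψ = ξ := by
  rw [forall_le_kappa_iff]
  constructor
  · rintro ⟨hle, hzero⟩
    choose χ hχ using fun s => T.exists_mul_eq (hle (p + s))
    refine ⟨lower χ, distDistr_lower χ, funext fun t => ?_⟩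
    rw [conv_kappa_apply T p a (distDistr_lower χ), T.mul_iSup₂]
    simp only [lower, T.mul_iSup₂, hχ]
    exact hξ.iSup_lower_comp_add hzero t
  · rintro ⟨ψ, hψ, rfl⟩
    refine ⟨fun t => (conv_kappa_apply T p a hψ t).trans_le (T.mul_le_left _ _), fun t ht => ?_⟩
    have hempty : ∀ s, ¬ p + s < t := fun s hs => (le_self_add.trans_lt hs).not_ge ht
    simp only [conv_kappa_apply T p a hψ, hempty, iSup_false, iSup_const]
    exact T.mul_zero a

/-- a distance distribution `ξ` satisfies `ξ ≤ κ_{p,a}` iff it is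
divisible by `κ_{p,a}`. -/
theorem stmt_12 (T : ContinuousTNorm) (p : ℝ≥0∞) (hp : p ≠ ∞) (a : I)
    (ξ : ℝ≥0∞ → I) (hξ : DistDistr ξ) :
    (∀ t, ξ t ≤ kappa p a t) ↔
      ∃ ψ : ℝ≥0∞ → I, DistDistr ψ ∧ conv T (kappa p a) ψ = ξ :=
  stmt_12_general T p a ξ hξ
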